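/- There exists a strongly separately continuous function f : ℓ∞ → [0,1] that is of Baire class 2 but not of Baire class 1 on ℓ∞: f is a pointwise limit of a sequence of functions each of which is a pointwise limit of continuous functions ℓ∞ → [0,1], but f is not a pointwise limit of any sequence of continuous functions. (The instance α = 1 of the main theorem; the indicator function of the set A₁ of eventually-zero sequences is such a function.) -/

import Mathlib

open BoundedContinuousFunction Filter

/-- `f : ℓ∞ → ℝ` is strongly separately continuous: at each point `x₀`, for each
coordinate `k` and each `ε > 0` there is `δ > 0` such that whenever `‖x - x₀‖ < δ`,
the value of `f` at `x` and at the point `z` obtained from `x` by replacing the `k`-th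
coordinate with `x₀ k` differ by less than `ε`. -/
def SSC (f : (ℕ →ᵇ ℝ) → ℝ) : Prop :=
  ∀ (x₀ : ℕ →ᵇ ℝ) (k : ℕ), ∀ ε > (0 : ℝ), ∃ δ > (0 : ℝ), ∀ x : ℕ →ᵇ ℝ, ‖x - x₀‖ < δ →
    ∀ z : ℕ →ᵇ ℝ, z k = x₀ k → (∀ j ≠ k, z j = x j) → |f x - f z| < ε

/-- `f` is a pointwise limit of continuous functions `ℓ∞ → [0,1]`. -/
def BaireOne01 (f : (ℕ →ᵇ ℝ) → ℝ) : Prop :=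
  ∃ g : ℕ → (ℕ →ᵇ ℝ) → ℝ, (∀ n, Continuous (g n)) ∧
    (∀ n x, g n x ∈ Set.Icc (0 : ℝ) 1) ∧
    ∀ x, Tendsto (fun n => g n x) atTop (nhds (f x))

/-!
The indicator of the subspace `A` of eventually-zero sequences works. Changing one coordinate
does not affect membership in `A`, so the indicator is strongly separately continuous, and it is
the pointwise limit of the indicators of the closed sets `{x | ∀ j ≥ n, x j = 0}`, each of which
is a pointwise limit of thickened indicators.

A pointwise limit of continuous functions on a Baire space has small oscillation on some nonempty
open set. But `A` is a non-closed subspace, so inside the complete space `closure A` both `A` and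
`closure A \ A` are dense (translate points of `A` by small multiples of a vector of
`closure A \ A`), and the indicator of `A` oscillates by `1` on every nonempty open set.
-/

open Topology

theorem exists_isOpen_dist_lt_of_tendsto {X Y : Type*} [TopologicalSpace X] [BaireSpace X]
    [Nonempty X] [PseudoMetricSpace Y] {g : ℕ → X → Y} {f : X → Y} (hg : ∀ n, Continuous (g n))
    (hf : ∀ x, Tendsto (fun n => g n x) atTop (𝓝 (f x))) {ε : ℝ} (hε : 0 < ε) :
    ∃ U : Set X, IsOpen U ∧ U.Nonempty ∧ ∀ y ∈ U, ∀ z ∈ U, dist (f y) (f z) < ε := by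
  set E : ℕ → Set X := fun N => {x | ∀ m ≥ N, ∀ n ≥ N, dist (g m x) (g n x) ≤ ε / 4}
  have hE_closed (N : ℕ) : IsClosed (E N) := by
    simp only [E, Set.ofPred_forall]
    exact isClosed_iInter fun m => isClosed_iInter fun _ => isClosed_iInter fun n =>
      isClosed_iInter fun _ => isClosed_le ((hg m).dist (hg n)) continuous_const
  have hE_cover : ⋃ N, E N = Set.univ := by
    refine Set.eq_univ_of_forall fun x => Set.mem_iUnion.2 ?_
    obtain ⟨N, hN⟩ := Metric.cauchySeq_iff.1 (hf x).cauchySeq (ε / 4) (by positivity)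
    exact ⟨N, fun m hm n hn => (hN m hm n hn).le⟩
  obtain ⟨N, x₀, hx₀⟩ := nonempty_interior_of_iUnion_of_closed hE_closed hE_cover
  have hf_near (y : X) (hy : y ∈ E N) : dist (f y) (g N y) ≤ ε / 4 :=
    le_of_tendsto ((hf y).dist tendsto_const_nhds)
      (eventually_atTop.2 ⟨N, fun m hm => hy m hm N le_rfl⟩)
  set U := interior (E N) ∩ g N ⁻¹' Metric.ball (g N x₀) (ε / 4)
  have hf_center (y : X) (hy : y ∈ U) : dist (f y) (g N x₀) < ε / 2 := by
    have := hf_near y (interior_subset hy.1)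
    have := Metric.mem_ball.1 hy.2
    linarith [dist_triangle (f y) (g N y) (g N x₀)]
  refine ⟨U, isOpen_interior.inter (Metric.isOpen_ball.preimage (hg N)),
    ⟨x₀, hx₀, Metric.mem_ball_self (by positivity)⟩, fun y hy z hz => ?_⟩
  linarith [dist_triangle_right (f y) (f z) (g N x₀), hf_center y hy, hf_center z hz]

theorem not_tendsto_indicator_of_dense_of_dense_compl {X : Type*} [TopologicalSpace X]
    [BaireSpace X] [Nonempty X] {s : Set X} (hs : Dense s) (hsc : Dense sᶜ) {g : ℕ → X → ℝ}
    (hg : ∀ n, Continuous (g n)) :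
    ¬ ∀ x, Tendsto (fun n => g n x) atTop (𝓝 (s.indicator 1 x)) := by
  intro hlim
  obtain ⟨U, hU, hU_ne, hosc⟩ := exists_isOpen_dist_lt_of_tendsto hg hlim one_pos
  obtain ⟨y, hyU, hys⟩ := hs.inter_open_nonempty U hU hU_ne
  obtain ⟨z, hzU, hzs⟩ := hsc.inter_open_nonempty U hU hU_ne
  simpa [hys, Set.indicator_of_notMem hzs] using hosc y hyU z hzU

theorem Submodule.closure_subset_closure_closure_diff {𝕜 E : Type*} [NontriviallyNormedField 𝕜]
    [AddCommGroup E] [Module 𝕜 E] [TopologicalSpace E] [IsTopologicalAddGroup E]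
    [ContinuousSMul 𝕜 E] {p : Submodule 𝕜 E} (hp : ¬ IsClosed (p : Set E)) :
    closure (p : Set E) ⊆ closure (closure p \ p) := by
  obtain ⟨v, hv_cl, hv⟩ : ∃ v ∈ closure (p : Set E), v ∉ p := by
    by_contra! h
    exact hp (closure_subset_iff_isClosed.1 h)
  refine closure_minimal (fun y hy => ?_) isClosed_closure
  have h_lim : Tendsto (fun t : 𝕜 => y + t • v) (𝓝[≠] 0) (𝓝 y) := by
    refine tendsto_nhdsWithin_of_tendsto_nhds ?_
    simpa using ((continuous_id.smul continuous_const).const_add y).tendsto (0 : 𝕜)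
  refine mem_closure_of_tendsto h_lim (eventually_nhdsWithin_of_forall fun t ht => ⟨?_, ?_⟩)
  · exact p.topologicalClosure.add_mem (p.le_topologicalClosure hy)
      (p.topologicalClosure.smul_mem t hv_cl)
  · exact fun h => hv ((p.smul_mem_iff ht).1 ((p.add_mem_iff_right hy).1 h))

theorem SSC.of_eq_of_eq_off {f : (ℕ →ᵇ ℝ) → ℝ}
    (hf : ∀ (x z : ℕ →ᵇ ℝ) (k : ℕ), (∀ j ≠ k, z j = x j) → f x = f z) : SSC f :=
  fun _ k _ hε => ⟨1, one_pos, fun x _ z _ hz => by simpa [hf x z k hz] using hε⟩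

theorem baireOne01_indicator_of_isClosed {s : Set (ℕ →ᵇ ℝ)} (hs : IsClosed s) :
    BaireOne01 (s.indicator 1) := by
  have hδ (n : ℕ) : (0 : ℝ) < 1 / (n + 1) := Nat.one_div_pos_of_nat
  have hlim := thickenedIndicator_tendsto_indicator_closure hδ
    tendsto_one_div_add_atTop_nhds_zero_nat s
  refine ⟨fun n x => thickenedIndicator (hδ n) s x, fun n => ?_, fun n x => ⟨by positivity, ?_⟩,
    fun x => ?_⟩
  · exact NNReal.continuous_coe.comp (thickenedIndicator (hδ n) s).continuous
  · exact_mod_cast thickenedIndicator_le_one (hδ n) s x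
  · have := (NNReal.continuous_coe.tendsto _).comp (tendsto_pi_nhds.1 hlim x)
    have h_one : ((s.indicator (fun _ => (1 : NNReal)) x : NNReal) : ℝ) = s.indicator 1 x := by
      by_cases hx : x ∈ s <;> simp [hx]
    rwa [hs.closure_eq, h_one] at this

def eventuallyZero : Submodule ℝ (ℕ →ᵇ ℝ) where
  carrier := {x | ∀ᶠ k in atTop, x k = 0}
  add_mem' hx hy := (hx.and hy).mono fun k h => by simp [h.1, h.2]
  zero_mem' := Eventually.of_forall fun _ => rfl
  smul_mem' c x hx := hx.mono fun k h => by simp [h]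

theorem mem_eventuallyZero_iff_of_eq_off {x z : ℕ →ᵇ ℝ} {k : ℕ} (h : ∀ j ≠ k, z j = x j) :
    x ∈ eventuallyZero ↔ z ∈ eventuallyZero :=
  eventually_congr <| (eventually_ne_atTop k).mono fun j hj => by rw [h j hj]

def vanishingFrom (n : ℕ) : Set (ℕ →ᵇ ℝ) := {x | ∀ j ≥ n, x j = 0}

theorem isClosed_vanishingFrom (n : ℕ) : IsClosed (vanishingFrom n) := by
  simp only [vanishingFrom, Set.ofPred_forall]
  exact isClosed_iInter fun j => isClosed_iInter fun _ =>
    isClosed_eq (continuous_eval_const j) continuous_const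

theorem tendsto_indicator_vanishingFrom :
    Tendsto (fun n => (vanishingFrom n).indicator (1 : (ℕ →ᵇ ℝ) → ℝ)) atTop
      (𝓝 ((eventuallyZero : Set (ℕ →ᵇ ℝ)).indicator 1)) := by
  refine (tendsto_indicator_const_iff_forall_eventually atTop (1 : ℝ)).2 fun x => ?_
  by_cases hx : x ∈ eventuallyZero
  · obtain ⟨N, hN⟩ := eventually_atTop.1 hx
    exact eventually_atTop.2 ⟨N, fun n hn => iff_of_true (fun j hj => hN j (hn.trans hj)) hx⟩
  · exact Eventually.of_forall fun n => iff_of_false (fun h => hx (eventually_atTop.2 ⟨n, h⟩)) hx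

theorem mem_closure_eventuallyZero_of_tendsto {x : ℕ →ᵇ ℝ} (hx : Tendsto x atTop (𝓝 0)) :
    x ∈ closure (eventuallyZero : Set (ℕ →ᵇ ℝ)) := by
  refine Metric.mem_closure_iff.2 fun ε hε => ?_
  obtain ⟨N, hN⟩ := eventually_atTop.1 (hx.eventually (Metric.closedBall_mem_nhds 0 (half_pos hε)))
  let y : ℕ →ᵇ ℝ := ofNormedAddCommGroupDiscrete (fun k => if k < N then x k else 0) ‖x‖
    fun k => by split_ifs; exacts [norm_coe_le_norm x k, by simp]
  refine ⟨y, eventually_atTop.2 ⟨N, fun k hk => if_neg (not_lt.2 hk)⟩, ?_⟩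
  refine lt_of_le_of_lt ((dist_le (half_pos hε).le).2 fun k => ?_) (half_lt_self hε)
  by_cases hk : k < N
  · simpa [y, hk] using (half_pos hε).le
  · simpa [y, hk] using hN k (not_lt.1 hk)

theorem not_isClosed_eventuallyZero : ¬ IsClosed (eventuallyZero : Set (ℕ →ᵇ ℝ)) := by
  let e : ℕ →ᵇ ℝ := ofNormedAddCommGroupDiscrete (fun k => (2 : ℝ)⁻¹ ^ k) 1
    fun k => by simpa using pow_le_one₀ (n := k) (by norm_num : (0 : ℝ) ≤ 2⁻¹) (by norm_num)
  have he : e ∉ eventuallyZero := fun h => by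
    obtain ⟨k, hk⟩ := h.exists
    simp [e] at hk
  exact fun hc => he <| hc.closure_subset <| mem_closure_eventuallyZero_of_tendsto
    (tendsto_pow_atTop_nhds_zero_of_lt_one (by norm_num) (by norm_num))

theorem not_tendsto_indicator_eventuallyZero {g : ℕ → (ℕ →ᵇ ℝ) → ℝ} (hg : ∀ n, Continuous (g n)) :
    ¬ ∀ x, Tendsto (fun n => g n x) atTop (𝓝 ((eventuallyZero : Set (ℕ →ᵇ ℝ)).indicator 1 x)) := by
  set A : Set (ℕ →ᵇ ℝ) := ↑eventuallyZero
  have : CompleteSpace (closure A) := isClosed_closure.completeSpace_coe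
  have : Nonempty (closure A) := ⟨⟨0, subset_closure eventuallyZero.zero_mem⟩⟩
  have h_dense : Dense (Subtype.val ⁻¹' A : Set (closure A)) := by
    rw [Subtype.dense_iff, Subtype.image_preimage_coe, Set.inter_eq_right.2 subset_closure]
  have h_dense_compl : Dense (Subtype.val ⁻¹' A : Set (closure A))ᶜ := by
    rw [Subtype.dense_iff, ← Set.preimage_compl, Subtype.image_preimage_coe]
    exact Submodule.closure_subset_closure_closure_diff not_isClosed_eventuallyZero
  intro hlim
  refine not_tendsto_indicator_of_dense_of_dense_compl h_dense h_dense_compl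
    (fun n => (hg n).comp continuous_subtype_val) fun x => ?_
  simpa [← Set.indicator_comp_right] using hlim x

/-- There is a strongly separately continuous `f : ℓ∞ → [0,1]` which is a pointwise
limit of a sequence of Baire-one functions (with values in `[0,1]`), but is not a
pointwise limit of any sequence of continuous functions `ℓ∞ → ℝ`. -/
theorem exists_ssc_baire_two_not_baire_one :
    ∃ f : (ℕ →ᵇ ℝ) → ℝ,
      (∀ x, f x ∈ Set.Icc (0 : ℝ) 1) ∧
      SSC f ∧
      (∃ g : ℕ → (ℕ →ᵇ ℝ) → ℝ, (∀ n, BaireOne01 (g n)) ∧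
        ∀ x, Tendsto (fun n => g n x) atTop (nhds (f x))) ∧
      ¬ (∃ g : ℕ → (ℕ →ᵇ ℝ) → ℝ, (∀ n, Continuous (g n)) ∧
        ∀ x, Tendsto (fun n => g n x) atTop (nhds (f x))) := by
  refine ⟨(eventuallyZero : Set (ℕ →ᵇ ℝ)).indicator 1, fun x => ?_, ?_, ?_, ?_⟩
  · by_cases hx : x ∈ eventuallyZero <;> simp [hx]
  · refine SSC.of_eq_of_eq_off fun x z k h => ?_
    by_cases hx : x ∈ eventuallyZero
    · simp [hx, (mem_eventuallyZero_iff_of_eq_off h).1 hx]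
    · simp [hx, mt (mem_eventuallyZero_iff_of_eq_off h).2 hx]
  · exact ⟨fun n => (vanishingFrom n).indicator 1,
      fun n => baireOne01_indicator_of_isClosed (isClosed_vanishingFrom n),
      tendsto_pi_nhds.1 tendsto_indicator_vanishingFrom⟩
  · rintro ⟨g, hg, hlim⟩
    exact not_tendsto_indicator_eventuallyZero hg hlim
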